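/- Let N be a positive integer, 1 ≤ k ≤ N, and f a real-valued function on S(k) := {ξ ∈ {0,1}^N : Σᵢ ξᵢ = k}. For p ∈ (0,1)^N define wᵢ = pᵢ/(1 − pᵢ) and F_k(p) := Σ_{ξ ∈ S(k)} f(ξ) (Πᵢ wᵢ^{ξᵢ}) / e_k(w), where e_k is the k-th elementary symmetric polynomial. Then sup over p ∈ (0,1)^N of F_k(p) equals max over ξ ∈ S(k) of f(ξ). -/

import Mathlib

/-!
`F_k(p)` is the average of `f` over the designs with `k` active entries, weighted by the
positive numbers `∏ᵢ wᵢ ^ ξᵢ`; hence it never exceeds the maximum of `f`. Conversely, let `ξ*`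
be a maximiser and put `wᵢ = t` on the active entries of `ξ*` and `wᵢ = 1` elsewhere. The weight
of `ξ` becomes `t ^ |ξ ∩ ξ*|`, and among designs with `k` active entries only `ξ*` reaches the
exponent `k`, so as `t → ∞` the average concentrates on `ξ*` and tends to `f ξ*`.
-/

open Finset Filter Topology

/-- The weights `wᵢ = pᵢ/(1 − pᵢ)` of the conditional Bernoulli model. -/
noncomputable def cbWeight {N : ℕ} (p : Fin N → ℝ) (i : Fin N) : ℝ :=
  p i / (1 - p i)

/-- `e_k(w(p))`: the `k`-th elementary symmetric polynomial of the weights. -/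
noncomputable def cbEsymm {N : ℕ} (k : ℕ) (p : Fin N → ℝ) : ℝ :=
  ∑ S ∈ (univ : Finset (Fin N)).powersetCard k, ∏ i ∈ S, cbWeight p i

section WeightedMean

variable {ι : Type*} {s : Finset ι}

theorem Finset.sum_mul_div_sum_le_sup' (hs : s.Nonempty) (f : ι → ℝ) {w : ι → ℝ}
    (hw : ∀ i ∈ s, 0 < w i) :
    (∑ i ∈ s, f i * w i) / ∑ i ∈ s, w i ≤ s.sup' hs f := by
  rw [div_le_iff₀ (sum_pos hw hs), mul_sum]
  exact sum_le_sum fun i hi => mul_le_mul_of_nonneg_right (le_sup' f hi) (hw i hi).le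

theorem tendsto_sum_mul_pow_div_pow_atTop {i₀ : ι} (hi₀ : i₀ ∈ s) {a : ι → ℕ}
    (ha : ∀ i ∈ s, i ≠ i₀ → a i < a i₀) (c : ι → ℝ) :
    Tendsto (fun t : ℝ => (∑ i ∈ s, c i * t ^ a i) / t ^ a i₀) atTop (𝓝 (c i₀)) := by
  classical
  have hterm : ∀ i ∈ s, Tendsto (fun t : ℝ => c i * (t ^ a i / t ^ a i₀)) atTop
      (𝓝 (if i = i₀ then c i else 0)) := by
    intro i hi
    split_ifs with h
    · subst h
      refine tendsto_const_nhds.congr' ?_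
      filter_upwards [eventually_ne_atTop 0] with t ht
      rw [div_self (pow_ne_zero _ ht), mul_one]
    · simpa using (tendsto_pow_div_pow_atTop_zero (ha i hi h)).const_mul (c i)
  have hsum := tendsto_finsetSum s hterm
  rw [sum_ite_eq' s i₀, if_pos hi₀] at hsum
  simpa only [sum_div, mul_div_assoc] using hsum

theorem tendsto_sum_mul_pow_div_sum_pow_atTop {i₀ : ι} (hi₀ : i₀ ∈ s) {a : ι → ℕ}
    (ha : ∀ i ∈ s, i ≠ i₀ → a i < a i₀) (c : ι → ℝ) :
    Tendsto (fun t : ℝ => (∑ i ∈ s, c i * t ^ a i) / ∑ i ∈ s, t ^ a i) atTop (𝓝 (c i₀)) := by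
  have hnum := tendsto_sum_mul_pow_div_pow_atTop hi₀ ha c
  have hden := tendsto_sum_mul_pow_div_pow_atTop hi₀ ha 1
  simp only [Pi.one_apply, one_mul] at hden
  refine (div_one (c i₀) ▸ hnum.div hden one_ne_zero).congr' ?_
  filter_upwards [eventually_ne_atTop 0] with t ht
  exact div_div_div_cancel_right₀ (pow_ne_zero _ ht) _ _

end WeightedMean

section BinaryDesigns

variable {ι : Type*} [Fintype ι]

def activeSet (ξ : ι → Fin 2) : Finset ι :=
  univ.filter fun i => ξ i = 1

lemma Fin.val_two_eq_ite (x : Fin 2) : (x : ℕ) = if x = 1 then 1 else 0 := by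
  fin_cases x <;> rfl

lemma prod_pow_val_eq_prod_activeSet {M : Type*} [CommMonoid M] (g : ι → M) (ξ : ι → Fin 2) :
    ∏ i, g i ^ (ξ i : ℕ) = ∏ i ∈ activeSet ξ, g i := by
  rw [activeSet, prod_filter]
  exact prod_congr rfl fun i _ => by rw [Fin.val_two_eq_ite]; split_ifs <;> simp

lemma sum_val_eq_card_activeSet (ξ : ι → Fin 2) : ∑ i, (ξ i : ℕ) = #(activeSet ξ) := by
  rw [activeSet, card_filter]
  exact sum_congr rfl fun i _ => Fin.val_two_eq_ite _

lemma activeSet_injective : Function.Injective (activeSet : (ι → Fin 2) → Finset ι) := by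
  intro ξ η h
  funext i
  have hi : ξ i = 1 ↔ η i = 1 := by simpa [activeSet] using congrArg (i ∈ ·) h
  exact Fin.ext (by rw [Fin.val_two_eq_ite, Fin.val_two_eq_ite, if_congr hi rfl rfl])

variable [DecidableEq ι]

def budgetDesigns (ι : Type*) [Fintype ι] [DecidableEq ι] (k : ℕ) : Finset (ι → Fin 2) :=
  univ.filter fun ξ => ∑ i, (ξ i : ℕ) = k

lemma activeSet_indicator (S : Finset ι) :
    activeSet (fun i => if i ∈ S then (1 : Fin 2) else 0) = S := by
  ext i
  simp [activeSet]

lemma mem_budgetDesigns {k : ℕ} {ξ : ι → Fin 2} :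
    ξ ∈ budgetDesigns ι k ↔ #(activeSet ξ) = k := by
  simp [budgetDesigns, sum_val_eq_card_activeSet]

lemma sum_budgetDesigns_activeSet {M : Type*} [AddCommMonoid M] (k : ℕ) (g : Finset ι → M) :
    ∑ ξ ∈ budgetDesigns ι k, g (activeSet ξ) = ∑ S ∈ powersetCard k univ, g S := by
  refine sum_nbij activeSet (fun ξ hξ => ?_) activeSet_injective.injOn (fun S hS => ?_)
    (fun _ _ => rfl)
  · exact mem_powersetCard_univ.2 (mem_budgetDesigns.1 hξ)
  · refine ⟨_, ?_, activeSet_indicator S⟩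
    rw [mem_coe, mem_budgetDesigns, activeSet_indicator, mem_powersetCard_univ.1 hS]

lemma prod_ite_pow_val {M : Type*} [CommMonoid M] (A : Finset ι) (t : M) (ξ : ι → Fin 2) :
    ∏ i, (if i ∈ A then t else 1) ^ (ξ i : ℕ) = t ^ #(activeSet ξ ∩ A) := by
  rw [prod_pow_val_eq_prod_activeSet, prod_ite_mem, prod_const]

lemma card_activeSet_inter_lt {k : ℕ} {ξ η : ι → Fin 2} (hξ : ξ ∈ budgetDesigns ι k)
    (hη : η ∈ budgetDesigns ι k) (hne : ξ ≠ η) : #(activeSet ξ ∩ activeSet η) < k := by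
  rw [mem_budgetDesigns] at hξ hη
  by_contra! hle
  have hsub : activeSet ξ ⊆ activeSet η :=
    inter_eq_left.1 (eq_of_subset_of_card_le inter_subset_left (hξ.trans_le hle))
  exact hne (activeSet_injective (eq_of_subset_of_card_le hsub (hη.trans hξ.symm).le))

end BinaryDesigns

section ConditionalBernoulli

variable {ι : Type*} [Fintype ι] [DecidableEq ι]

/-- `F_k` in the coordinates `w = p / (1 - p)`. -/
noncomputable def cbMean (k : ℕ) (f : (ι → Fin 2) → ℝ) (w : ι → ℝ) : ℝ :=
  (∑ ξ ∈ budgetDesigns ι k, f ξ * ∏ i, w i ^ (ξ i : ℕ)) /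
    ∑ ξ ∈ budgetDesigns ι k, ∏ i, w i ^ (ξ i : ℕ)

lemma cbMean_le_sup' {k : ℕ} (hne : (budgetDesigns ι k).Nonempty) (f : (ι → Fin 2) → ℝ)
    {w : ι → ℝ} (hw : ∀ i, 0 < w i) : cbMean k f w ≤ (budgetDesigns ι k).sup' hne f :=
  sum_mul_div_sum_le_sup' hne f fun _ _ => prod_pos fun i _ => pow_pos (hw i) _

lemma tendsto_cbMean_ite {k : ℕ} {ξ₀ : ι → Fin 2} (hξ₀ : ξ₀ ∈ budgetDesigns ι k)
    (f : (ι → Fin 2) → ℝ) :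
    Tendsto (fun t : ℝ => cbMean k f (fun i => if i ∈ activeSet ξ₀ then t else 1)) atTop
      (𝓝 (f ξ₀)) := by
  simp only [cbMean, prod_ite_pow_val]
  refine tendsto_sum_mul_pow_div_sum_pow_atTop hξ₀ (fun ξ hξ hne => ?_) f
  rw [inter_self, mem_budgetDesigns.1 hξ₀]
  exact card_activeSet_inter_lt hξ hξ₀ hne

lemma cbEsymm_eq_sum_budgetDesigns {N : ℕ} (k : ℕ) (p : Fin N → ℝ) :
    cbEsymm k p = ∑ ξ ∈ budgetDesigns (Fin N) k, ∏ i, cbWeight p i ^ (ξ i : ℕ) := by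
  simp only [prod_pow_val_eq_prod_activeSet]
  exact (sum_budgetDesigns_activeSet k fun S => ∏ i ∈ S, cbWeight p i).symm

lemma cbWeight_pos {N : ℕ} {p : Fin N → ℝ} (hp : ∀ i, p i ∈ Set.Ioo (0 : ℝ) 1) (i : Fin N) :
    0 < cbWeight p i :=
  div_pos (hp i).1 (sub_pos.2 (hp i).2)

lemma cbWeight_div_one_add {N : ℕ} {w : Fin N → ℝ} (hw : ∀ i, 0 ≤ w i) :
    cbWeight (fun i => w i / (1 + w i)) = w := by
  funext i
  have : 1 + w i ≠ 0 := by linarith [hw i]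
  simp only [cbWeight]
  field_simp
  ring

lemma div_one_add_mem_Ioo {x : ℝ} (hx : 0 < x) : x / (1 + x) ∈ Set.Ioo (0 : ℝ) 1 :=
  ⟨by positivity, (div_lt_one (by positivity)).2 (by linarith)⟩

end ConditionalBernoulli

theorem stmt_16_general (N : ℕ) (k : ℕ)
    (f : (Fin N → Fin 2) → ℝ)
    (Fk : (Fin N → ℝ) → ℝ)
    (hFk : ∀ p, Fk p =
      ∑ ξ ∈ univ.filter (fun ξ : Fin N → Fin 2 => (∑ i, (ξ i : ℕ)) = k),
        f ξ * (∏ i, cbWeight p i ^ (ξ i : ℕ)) / cbEsymm k p)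
    (hne : (univ.filter
      (fun ξ : Fin N → Fin 2 => (∑ i, (ξ i : ℕ)) = k)).Nonempty) :
    IsLUB {y : ℝ | ∃ p : Fin N → ℝ,
        (∀ i, p i ∈ Set.Ioo (0 : ℝ) 1) ∧ Fk p = y}
      ((univ.filter
        (fun ξ : Fin N → Fin 2 => (∑ i, (ξ i : ℕ)) = k)).sup' hne f) := by
  have hFk_cbMean : ∀ p, Fk p = cbMean k f (cbWeight p) := fun p => by
    rw [hFk, ← sum_div, cbEsymm_eq_sum_budgetDesigns]
    rfl
  refine ⟨?_, fun b hb => ?_⟩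
  · rintro y ⟨p, hp, rfl⟩
    rw [hFk_cbMean]
    exact cbMean_le_sup' hne f (cbWeight_pos hp)
  · obtain ⟨ξ₀, hξ₀, hmax⟩ := exists_mem_eq_sup' hne f
    rw [hmax]
    refine le_of_tendsto (tendsto_cbMean_ite hξ₀ f) ?_
    filter_upwards [eventually_gt_atTop 0] with t ht
    set w : Fin N → ℝ := fun i => if i ∈ activeSet ξ₀ then t else 1
    have hw : ∀ i, 0 < w i := fun i => by dsimp only [w]; split_ifs <;> positivity
    have hbw := hb ⟨fun i => w i / (1 + w i), fun i => div_one_add_mem_Ioo (hw i), rfl⟩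
    rwa [hFk_cbMean, cbWeight_div_one_add fun i => (hw i).le] at hbw

/-- Equivalence of the budget-constrained probabilistic ROED policy
optimization with the original budget-constrained binary maximization: the
supremum over policies `p ∈ (0,1)^N` of the conditional Bernoulli expectation
`F_k(p) = Σ_{ξ ∈ S(k)} f(ξ) (Πᵢ wᵢ^{ξᵢ})/e_k(w)` equals the maximum of `f`
over the binary designs with exactly `k` active entries. -/
theorem stmt_16 (N : ℕ) (hN : 0 < N) (k : ℕ) (hk1 : 1 ≤ k) (hkN : k ≤ N)
    (f : (Fin N → Fin 2) → ℝ)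
    (Fk : (Fin N → ℝ) → ℝ)
    (hFk : ∀ p, Fk p =
      ∑ ξ ∈ univ.filter (fun ξ : Fin N → Fin 2 => (∑ i, (ξ i : ℕ)) = k),
        f ξ * (∏ i, cbWeight p i ^ (ξ i : ℕ)) / cbEsymm k p)
    (hne : (univ.filter
      (fun ξ : Fin N → Fin 2 => (∑ i, (ξ i : ℕ)) = k)).Nonempty) :
    IsLUB {y : ℝ | ∃ p : Fin N → ℝ,
        (∀ i, p i ∈ Set.Ioo (0 : ℝ) 1) ∧ Fk p = y}
      ((univ.filter
        (fun ξ : Fin N → Fin 2 => (∑ i, (ξ i : ℕ)) = k)).sup' hne f) :=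
  stmt_16_general N k f Fk hFk hne
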